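/- For each function f in PCSF (with n normal and m safe arguments) there exists a polynomial p_f in n variables such that for all hereditarily finite sets X̄=X₁,…,Xₙ and Ā=A₁,…,Aₘ: cT(f(X̄/Ā)) ≤ p_f(cT(X₁),…,cT(Xₙ)) + cT(A₁∪⋯∪Aₘ), where cT(X) denotes the cardinality of the transitive closure of X. (In particular the safe arguments contribute only linearly and are never duplicated.) -/

import Mathlib

open scoped Classical

noncomputable section

namespace PCSFPaper

/-! ## Basic ZF-set helpers -/

/-- Image `{f z : z ∈ x}` of a ZF-set under an arbitrary class function. -/
noncomputable def zImage (f : ZFSet → ZFSet) (x : ZFSet) : ZFSet :=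
  @ZFSet.image f (Classical.allZFSetDefinable fun s => f (s 0)) x

/-- Kuratowski ordered pair `⟨c,d⟩ = {{c},{c,d}}`. -/
def kpair (c d : ZFSet) : ZFSet := {{c}, {c, d}}

/-! ## Δ₀ formulas of the language of set theory -/

/-- Δ₀ (bounded) formulas in the first-order language of set theory,
with `k` free variables.  In the bounded quantifiers `ball i φ`/`bex i φ`
the newly bound variable (ranging over the elements of variable `i`)
becomes variable `0` of `φ`, the old variables being shifted up by one. -/
inductive D0 : ℕ → Type
  | mem {k : ℕ} (i j : Fin k) : D0 k
  | eq {k : ℕ} (i j : Fin k) : D0 k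
  | not {k : ℕ} : D0 k → D0 k
  | and {k : ℕ} : D0 k → D0 k → D0 k
  | or {k : ℕ} : D0 k → D0 k → D0 k
  | ball {k : ℕ} (i : Fin k) : D0 (k + 1) → D0 k
  | bex {k : ℕ} (i : Fin k) : D0 (k + 1) → D0 k

/-- Satisfaction of Δ₀ formulas in the universe of ZF-sets. -/
def D0.Sat : ∀ {k : ℕ}, D0 k → (Fin k → ZFSet) → Prop
  | _, .mem i j, v => v i ∈ v j
  | _, .eq i j, v => v i = v j
  | _, .not φ, v => ¬ φ.Sat v
  | _, .and φ ψ, v => φ.Sat v ∧ ψ.Sat v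
  | _, .or φ ψ, v => φ.Sat v ∨ ψ.Sat v
  | _, .ball i φ, v => ∀ z ∈ v i, φ.Sat (Fin.cons z v)
  | _, .bex i φ, v => ∃ z ∈ v i, φ.Sat (Fin.cons z v)

/-- A `k`-ary relation on sets is Δ₀ iff it is defined by some Δ₀ formula. -/
def IsDelta0 {k : ℕ} (R : (Fin k → ZFSet) → Prop) : Prop :=
  ∃ φ : D0 k, ∀ v, R v ↔ φ.Sat v

/-! ## The classes PCSF⁻ and PCSF -/

/-- The class `PCSF⁻` of predicatively computable set functions taking only
safe arguments: generated from projections, pairing, null, union and the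
membership conditional, by composition and safe separation. -/
inductive PCSFminus : ∀ m : ℕ, ((Fin m → ZFSet) → ZFSet) → Prop
  | proj {m : ℕ} (j : Fin m) : PCSFminus m fun a => a j
  | pair : PCSFminus 2 fun a => {a 0, a 1}
  | null : PCSFminus 0 fun _ => ∅
  | union : PCSFminus 1 fun a => ZFSet.sUnion (a 0)
  | cond : PCSFminus 4 fun a => if a 2 ∈ a 3 then a 0 else a 1
  | comp {m k : ℕ} (h : (Fin k → ZFSet) → ZFSet) (t : Fin k → (Fin m → ZFSet) → ZFSet) :
      PCSFminus k h → (∀ i, PCSFminus m (t i)) →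
      PCSFminus m fun a => h fun i => t i a
  | sep {m : ℕ} (h : (Fin (m + 1) → ZFSet) → ZFSet) :
      PCSFminus (m + 1) h →
      PCSFminus (m + 1) fun a =>
        ZFSet.sep (fun b => h (Fin.snoc (Fin.init a) b) ≠ ∅) (a (Fin.last m))

/-- The class `PCSF` of predicatively computable set functions, with `n` normal
and `m` safe arguments: generated from `PCSF⁻` (whose arguments are all safe)
and projections by safe composition and predicative set recursion.  The
recursion rule is stated via its defining equation (which determines the
function uniquely, by ∈-induction); the recursion argument `x` is the first
normal argument, and the set `{f(z,ȳ/ā) : z ∈ x}` of previous values is passed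
to `h` as a last, safe, argument. -/
inductive PCSF : ∀ n m : ℕ, ((Fin n → ZFSet) → (Fin m → ZFSet) → ZFSet) → Prop
  | ofMinus {m : ℕ} (h : (Fin m → ZFSet) → ZFSet) :
      PCSFminus m h → PCSF 0 m fun _ a => h a
  | proj {n m : ℕ} (j : Fin (n + m)) : PCSF n m fun x a => Fin.append x a j
  | comp {n m k l : ℕ} (h : (Fin k → ZFSet) → (Fin l → ZFSet) → ZFSet)
      (r : Fin k → (Fin n → ZFSet) → (Fin 0 → ZFSet) → ZFSet)
      (t : Fin l → (Fin n → ZFSet) → (Fin m → ZFSet) → ZFSet) :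
      PCSF k l h → (∀ i, PCSF n 0 (r i)) → (∀ i, PCSF n m (t i)) →
      PCSF n m fun x a => h (fun i => r i x Fin.elim0) fun i => t i x a
  | recur {n m : ℕ} (h : (Fin (n + 1) → ZFSet) → (Fin (m + 1) → ZFSet) → ZFSet)
      (f : (Fin (n + 1) → ZFSet) → (Fin m → ZFSet) → ZFSet) :
      PCSF (n + 1) (m + 1) h →
      (∀ (x : ZFSet) (y : Fin n → ZFSet) (a : Fin m → ZFSet),
        f (Fin.cons x y) a =
          h (Fin.cons x y) (Fin.snoc a (zImage (fun z => f (Fin.cons z y) a) x))) →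
      PCSF (n + 1) m f

/-- A relation is in `PCSF` iff its characteristic function
(`1 = {∅}` for true, `0 = ∅` for false) is in `PCSF`. -/
def PCSFRel (n m : ℕ) (R : (Fin n → ZFSet) → (Fin m → ZFSet) → Prop) : Prop :=
  PCSF n m fun x a => if R x a then ({∅} : ZFSet) else ∅

/-! ## Transitive closure, hereditary finiteness -/

/-- Transitive closure `TC(x) = x ∪ ⋃{TC(y) : y ∈ x}` by ∈-recursion. -/
noncomputable def TCset : ZFSet → ZFSet :=
  ZFSet.mem_wf.fix fun x ih =>
    x ∪ ZFSet.sUnion (zImage (fun y => if h : y ∈ x then ih y h else ∅) x)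

/-- A set is hereditarily finite iff its transitive closure is finite. -/
def IsHF (x : ZFSet) : Prop := (TCset x).toSet.Finite

/-- `cT x` = cardinality of the transitive closure of `x`
(junk value `0` if infinite). -/
noncomputable def cT (x : ZFSet) : ℕ := (TCset x).toSet.ncard

/-- The finite union `A₁ ∪ ⋯ ∪ Aₘ`. -/
def unionFin {m : ℕ} (A : Fin m → ZFSet) : ZFSet :=
  (List.ofFn A).foldr (· ∪ ·) ∅

/-! ## The encoding ν of binary strings, application, product -/

/-- The von Neumann numeral 1 = {∅}. -/
def zOne : ZFSet := {∅}

/-- The von Neumann numeral 2 = {∅,{∅}}. -/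
def zTwo : ZFSet := {∅, {∅}}

/-- The encoding of binary strings (head of the list = last appended bit):
`ν(ε) = ∅` and `ν(s i) = ⟨i+1, ν s⟩`, a bit `i ∈ {0,1}` being represented
by the boolean `i = 1`. -/
def nu : List Bool → ZFSet
  | [] => ∅
  | b :: s => kpair (if b then zTwo else zOne) (nu s)

/-- `zApp b c = b'c = ⋃{d ∈ ⋃⋃b : ⟨c,d⟩ ∈ b}` (which is `⋃{d : ⟨c,d⟩ ∈ b}`,
since every such `d` belongs to `⋃⋃b`). -/
def zApp (b c : ZFSet) : ZFSet :=
  ZFSet.sUnion (ZFSet.sep (fun d => kpair c d ∈ b) (ZFSet.sUnion (ZFSet.sUnion b)))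

/-- Cartesian product `a × b = {⟨u,v⟩ : u ∈ a, v ∈ b}` (with Kuratowski pairs). -/
noncomputable def zProd (a b : ZFSet) : ZFSet :=
  ZFSet.sUnion (zImage (fun u => zImage (fun v => kpair u v) b) a)

/-! ## Polynomial time computability on binary strings -/

/-- The trivial encoding of binary strings over the alphabet `Bool`. -/
def boolListEncoding : Computability.Encoding (List Bool) Bool where
  encode := id
  decode := fun l => some l
  decode_encode := fun _ => rfl

/-- Encoding of a tuple of binary strings over the alphabet `Option Bool`:
the strings are listed in order, each terminated by the separator `none`. -/
def encTuple : (k : ℕ) → (Fin k → List Bool) → List (Option Bool)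
  | 0, _ => []
  | k + 1, v => (v 0).map some ++ none :: encTuple k (Fin.tail v)

/-- Splits off the first separator-terminated block. -/
def splitFirst : List (Option Bool) → List Bool × List (Option Bool)
  | [] => ([], [])
  | none :: l => ([], l)
  | some b :: l => ((splitFirst l).1.cons b, (splitFirst l).2)

theorem splitFirst_encode (s : List Bool) (rest : List (Option Bool)) :
    splitFirst (s.map some ++ none :: rest) = (s, rest) := by
  induction s with
  | nil => rfl
  | cons b s ih => simp [splitFirst, ih]

/-- Decoding of tuples of binary strings. -/
def decTuple : (k : ℕ) → List (Option Bool) → Option (Fin k → List Bool)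
  | 0, _ => some Fin.elim0
  | k + 1, l =>
    (decTuple k (splitFirst l).2).map fun v => Fin.cons (splitFirst l).1 v

theorem decTuple_encTuple : ∀ (k : ℕ) (v : Fin k → List Bool),
    decTuple k (encTuple k v) = some v := by
  intro k
  induction k with
  | zero =>
    intro v
    simp only [decTuple]
    congr
    exact funext fun i => i.elim0
  | succ k ih =>
    intro v
    simp [decTuple, encTuple, splitFirst_encode, ih (Fin.tail v), Fin.cons_self_tail]

/-- The standard encoding of tuples of binary strings. -/
def tupleEncoding (k : ℕ) : Computability.Encoding (Fin k → List Bool) (Option Bool) where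
  encode := encTuple k
  decode := decTuple k
  decode_encode := decTuple_encTuple k

/-- A function on tuples of binary strings is polynomial time computable iff
some two-stack machine computes it in polynomial time (Mathlib's notion). -/
def PolyTimeStringFun {k : ℕ} (f : (Fin k → List Bool) → List Bool) : Prop :=
  Nonempty (Turing.TM2ComputableInPolyTime (tupleEncoding k).encode boolListEncoding.encode f)

/-- Polynomial time computability for functions on ℕ,
with respect to the standard binary encoding of naturals. -/
def PolyTimeNatFun (f : ℕ → ℕ) : Prop :=
  Nonempty (Turing.TM2ComputableInPolyTime Computability.encodingNatBool.encode
    Computability.encodingNatBool.encode f)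

/-! ## A feasible encoding of lists of naturals by naturals -/

/-- Reads a list of bits (least significant first) as a natural number. -/
def bitsToNat (l : List Bool) : ℕ := l.foldr (fun b n => Nat.bit b n) 0

/-- A standard feasible (linear size) encoding of lists of natural numbers:
every bit of the binary expansion of an entry is escaped as `[false, b]`,
entries are terminated by `[true, true]`, and a final `true` protects
leading zeros. -/
def encodeNatList (l : List ℕ) : ℕ :=
  bitsToNat
    ((l.map fun n => (Nat.bits n).foldr (fun b acc => false :: b :: acc) [true, true]).foldr
        (· ++ ·) [true])

/-! ## Rooted DAGs encoding hereditarily finite sets -/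

/-- A rooted DAG: a finite set `V` of natural numbers, edges `E ⊆ V × V`
going strictly downwards, and a root `r ∈ V` which is the only node of
indegree zero. -/
structure RootedDag where
  V : Finset ℕ
  E : Finset (ℕ × ℕ)
  r : ℕ
  edge_mem : ∀ e ∈ E, e.1 ∈ V ∧ e.2 ∈ V
  root_mem : r ∈ V
  root_indeg : ∀ e ∈ E, e.2 ≠ r
  reach_nonroot : ∀ a ∈ V, a ≠ r → ∃ b ∈ V, (b, a) ∈ E
  desc : ∀ e ∈ E, e.2 < e.1

namespace RootedDag

/-- The children of a node. -/
def children (G : RootedDag) (a : ℕ) : Finset ℕ :=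
  (G.E.filter fun e => e.1 = a).image Prod.snd

theorem children_lt (G : RootedDag) {a b : ℕ} (h : b ∈ G.children a) : b < a := by
  simp only [children, Finset.mem_image, Finset.mem_filter] at h
  obtain ⟨e, ⟨heE, he1⟩, he2⟩ := h
  have := G.desc e heE
  omega

/-- The hereditarily finite set encoded at a node:
`set_G(a) = {set_G(b) : (a,b) ∈ E}`. -/
def setAt (G : RootedDag) (a : ℕ) : ZFSet.{0} :=
  (((G.children a).attach.toList).map fun b => G.setAt b.1).foldr insert ∅
termination_by a
decreasing_by exact G.children_lt b.2

/-- The hereditarily finite set encoded by a rooted DAG. -/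
def set (G : RootedDag) : ZFSet.{0} := G.setAt G.r

/-- A DAG is fully collapsed iff distinct nodes encode distinct sets. -/
def FullyCollapsed (G : RootedDag) : Prop :=
  ∀ a ∈ G.V, ∀ b ∈ G.V, G.setAt a = G.setAt b → a = b

/-- Reachability along edges. -/
def Reaches (G : RootedDag) (a b : ℕ) : Prop :=
  Relation.ReflTransGen (fun u v => (u, v) ∈ G.E) a b

/-- The node set of the sub-DAG `G|a` of nodes reachable from `a`. -/
noncomputable def reachSet (G : RootedDag) (a : ℕ) : Finset ℕ :=
  G.V.filter fun b => G.Reaches a b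

/-- A DAG is balanced iff each node `a` is at most the number of nodes of `G|a`. -/
def Balanced (G : RootedDag) : Prop :=
  ∀ a ∈ G.V, a ≤ (G.reachSet a).card

end RootedDag

/-- The numeric code `⌈G⌉` of a rooted DAG: the code of the triple consisting
of (the code of) the sorted list of vertices, (the code of) the sorted list of
pair-coded edges, and the root. -/
noncomputable def RootedDag.code (G : RootedDag) : ℕ :=
  encodeNatList [encodeNatList (G.V.sort (· ≤ ·)),
    encodeNatList ((G.E.image fun e => Nat.pair e.1 e.2).sort (· ≤ ·)), G.r]

/-- The finite set `{l₀, …, l_{n-1}}` as a ZF-set. -/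
def zSetOfList (l : List ZFSet) : ZFSet := l.foldr insert ∅

/-!
Write `excess y B = TC(y) \ TC(B)`. By induction on `PCSF`, for hereditarily finite normal
arguments the sets in `TC(f(X̄/Ā))` outside `TC(A₁ ∪ ⋯ ∪ Aₘ)` number at most `p(cT X̄)`, and
`TC(f(X̄/Ā))` is covered by these and `TC(A₁ ∪ ⋯ ∪ Aₘ)`.
In `PCSF⁻` the excess is bounded by a constant: only pairing adds anything, namely its two
arguments. Under composition the excess of `h(t̄)` over `Ā` is at most that of `h(t̄)` over `t̄`
plus those of the `tᵢ` over `Ā`; the normal arguments `rᵢ(X̄/)` have no safe arguments, so their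
whole `cT` is bounded. For a recursion on `x`, a new set of `f(x)` is new for the step `h` at
some `w ∈ {x} ∪ TC(x)` or belongs to `{f(z) : z ∈ w}`, whence the bound
`(cT x + 1)(p_h + cT x)`. Cardinalities are taken in `ℕ∞` (`Set.encard`), so no finiteness has
to be carried through the induction.
-/

theorem mem_zImage {f : ZFSet → ZFSet} {x z : ZFSet} :
    z ∈ zImage f x ↔ ∃ y ∈ x, f y = z :=
  @ZFSet.mem_image f (Classical.allZFSetDefinable fun s => f (s 0)) x z

theorem coe_zImage (f : ZFSet → ZFSet) (x : ZFSet) :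
    (zImage f x : Set ZFSet) = f '' x := by
  ext z
  exact mem_zImage

theorem mem_unionFin {m : ℕ} {A : Fin m → ZFSet} {z : ZFSet} :
    z ∈ unionFin A ↔ ∃ j, z ∈ A j := by
  suffices ∀ l : List ZFSet, z ∈ l.foldr (· ∪ ·) ∅ ↔ ∃ t ∈ l, z ∈ t by
    simp [unionFin, this]
  intro l
  induction l with
  | nil => simp
  | cons a l ih => simp [ih]

theorem unionFin_snoc {m : ℕ} (A : Fin m → ZFSet) (b : ZFSet) :
    unionFin (Fin.snoc A b) = unionFin A ∪ b := by
  ext z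
  simp [mem_unionFin, Fin.exists_fin_succ', or_comm]

theorem TCset_eq (x : ZFSet) : TCset x = x ∪ ZFSet.sUnion (zImage TCset x) := by
  rw [TCset, WellFounded.fix_eq]
  congr 2
  ext z
  simp only [mem_zImage]
  refine exists_congr fun y => and_congr_right fun hy => ?_
  simp [hy]

theorem mem_TCset {x z : ZFSet} : z ∈ TCset x ↔ z ∈ x ∨ ∃ y ∈ x, z ∈ TCset y := by
  rw [TCset_eq]
  simp [mem_zImage]

theorem subset_TCset (x : ZFSet) : x ⊆ TCset x :=
  fun _ hz => mem_TCset.2 (.inl hz)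

theorem TCset_subset_of_mem {x y : ZFSet} (h : y ∈ x) : TCset y ⊆ TCset x :=
  fun _ hz => mem_TCset.2 (.inr ⟨y, h, hz⟩)

theorem isTransitive_TCset (x : ZFSet) : (TCset x).IsTransitive := by
  induction x using ZFSet.inductionOn with
  | _ x ih =>
    intro y hy
    rcases mem_TCset.1 hy with hy | ⟨w, hw, hy⟩
    · exact (subset_TCset y).trans (TCset_subset_of_mem hy)
    · exact ((ih w hw).subset_of_mem hy).trans (TCset_subset_of_mem hw)

theorem TCset_subset_of_subset {x T : ZFSet} (hT : T.IsTransitive) (h : x ⊆ T) :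
    TCset x ⊆ T := by
  induction x using ZFSet.inductionOn with
  | _ x ih =>
    intro z hz
    rcases mem_TCset.1 hz with hz | ⟨y, hy, hz⟩
    · exact h hz
    · exact ih y hy (hT.subset_of_mem (h hy)) hz

theorem TCset_mono {x y : ZFSet} (h : x ⊆ y) : TCset x ⊆ TCset y :=
  TCset_subset_of_subset (isTransitive_TCset y) (h.trans (subset_TCset y))

theorem TCset_subset_of_mem_TCset {x w : ZFSet} (h : w ∈ TCset x) : TCset w ⊆ TCset x :=
  TCset_subset_of_subset (isTransitive_TCset x) ((isTransitive_TCset x).subset_of_mem h)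

theorem TCset_empty : TCset ∅ = ∅ := by
  ext z
  rw [mem_TCset]
  simp

theorem TCset_union (x y : ZFSet) : TCset (x ∪ y) = TCset x ∪ TCset y := by
  refine subset_antisymm ?_ ?_
  · refine TCset_subset_of_subset ((isTransitive_TCset x).union (isTransitive_TCset y)) ?_
    intro z hz
    simpa using (ZFSet.mem_union.1 hz).imp (subset_TCset x ·) (subset_TCset y ·)
  · intro z hz
    rcases ZFSet.mem_union.1 hz with hz | hz
    · exact TCset_mono (fun _ h => ZFSet.mem_union.2 (.inl h)) hz
    · exact TCset_mono (fun _ h => ZFSet.mem_union.2 (.inr h)) hz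

theorem coe_TCset_unionFin {m : ℕ} (A : Fin m → ZFSet) :
    (TCset (unionFin A) : Set ZFSet) = ⋃ j, (TCset (A j) : Set ZFSet) := by
  ext z
  simp only [SetLike.mem_coe, Set.mem_iUnion]
  refine ⟨fun hz => ?_, fun ⟨j, hz⟩ => TCset_mono (fun _ h => mem_unionFin.2 ⟨j, h⟩) hz⟩
  rcases mem_TCset.1 hz with hz | ⟨w, hw, hz⟩
  · obtain ⟨j, hj⟩ := mem_unionFin.1 hz
    exact ⟨j, subset_TCset _ hj⟩
  · obtain ⟨j, hj⟩ := mem_unionFin.1 hw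
    exact ⟨j, TCset_subset_of_mem hj hz⟩

theorem IsHF.of_TCset_subset {x y : ZFSet} (hy : IsHF y) (h : TCset x ⊆ TCset y) : IsHF x :=
  hy.subset (ZFSet.coe_subset_coe.2 h)

theorem IsHF.encard_TCset {x : ZFSet} (hx : IsHF x) : (TCset x : Set ZFSet).encard = cT x :=
  hx.cast_ncard_eq.symm

theorem cT_empty : cT ∅ = 0 := by
  rw [cT, TCset_empty]
  exact (congrArg Set.ncard ZFSet.coe_empty).trans (Set.ncard_empty _)

theorem cT_mono {x y : ZFSet} (hy : IsHF y) (h : TCset x ⊆ TCset y) : cT x ≤ cT y :=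
  Set.ncard_le_ncard (ZFSet.coe_subset_coe.2 h) hy

theorem encard_zImage_le_cT (g : ZFSet → ZFSet) {x : ZFSet} (hx : IsHF x) :
    (zImage g x : Set ZFSet).encard ≤ cT x := by
  rw [coe_zImage, ← hx.encard_TCset]
  exact (Set.encard_image_le _ _).trans
    (Set.encard_le_encard (ZFSet.coe_subset_coe.2 (subset_TCset x)))

theorem isHF_unionFin {m : ℕ} {A : Fin m → ZFSet} (hA : ∀ j, IsHF (A j)) :
    IsHF (unionFin A) := by
  change (TCset (unionFin A) : Set ZFSet).Finite
  rw [coe_TCset_unionFin]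
  exact Set.finite_iUnion hA

def excess (y B : ZFSet) : Set ZFSet := (TCset y : Set ZFSet) \ TCset B

theorem excess_eq_empty {y B : ZFSet} (h : y ⊆ TCset B) : excess y B = ∅ :=
  Set.sdiff_eq_empty.2 (ZFSet.coe_subset_coe.2 (TCset_subset_of_subset (isTransitive_TCset B) h))

theorem excess_unionFin_self {m : ℕ} (A : Fin m → ZFSet) (j : Fin m) :
    excess (A j) (unionFin A) = ∅ :=
  excess_eq_empty fun _ hz => subset_TCset _ (mem_unionFin.2 ⟨j, hz⟩)

theorem excess_subset (y B : ZFSet) : excess y B ⊆ (y : Set ZFSet) ∪ ⋃ z ∈ y, excess z B := by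
  rintro u ⟨hu, huB⟩
  rcases mem_TCset.1 hu with hu | ⟨z, hz, hu⟩
  · exact .inl hu
  · exact .inr (Set.mem_biUnion hz ⟨hu, huB⟩)

theorem excess_zImage_subset (g : ZFSet → ZFSet) (x B : ZFSet) :
    excess (zImage g x) B ⊆ (zImage g x : Set ZFSet) ∪ ⋃ z ∈ x, excess (g z) B := by
  refine (excess_subset _ B).trans (Set.union_subset_union_right _ ?_)
  simp only [Set.iUnion_subset_iff]
  intro w hw
  obtain ⟨z, hz, rfl⟩ := mem_zImage.1 hw
  exact Set.subset_biUnion_of_mem (u := fun z => excess (g z) B) hz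

theorem excess_triangle (y C B : ZFSet) : excess y B ⊆ excess y C ∪ excess C B :=
  sdiff_triangle _ _ _

theorem excess_union_self_left (B D : ZFSet) : excess (B ∪ D) B = excess D B := by
  simp [excess, TCset_union]

theorem excess_unionFin {k : ℕ} (t : Fin k → ZFSet) (B : ZFSet) :
    excess (unionFin t) B = ⋃ i, excess (t i) B := by
  simp [excess, coe_TCset_unionFin, Set.iUnion_sdiff]

theorem excess_subset_union_excess_snoc_zImage {m : ℕ} (v : ZFSet) (A : Fin m → ZFSet)
    (g : ZFSet → ZFSet) (x : ZFSet) :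
    excess v (unionFin A) ⊆ (excess v (unionFin (Fin.snoc A (zImage g x))) ∪ zImage g x) ∪
      ⋃ z ∈ x, excess (g z) (unionFin A) := by
  refine (excess_triangle _ (unionFin (Fin.snoc A (zImage g x))) _).trans ?_
  rw [unionFin_snoc, excess_union_self_left, ← unionFin_snoc, Set.union_assoc]
  exact Set.union_subset_union_right _ (excess_zImage_subset _ _ _)

theorem encard_excess_le_add_sum {k : ℕ} (y B : ZFSet) (t : Fin k → ZFSet) :
    (excess y B).encard ≤ (excess y (unionFin t)).encard + ∑ i, (excess (t i) B).encard :=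
  calc (excess y B).encard
      ≤ (excess y (unionFin t) ∪ excess (unionFin t) B).encard :=
        Set.encard_le_encard (excess_triangle _ _ _)
    _ ≤ (excess y (unionFin t)).encard + (excess (unionFin t) B).encard :=
        Set.encard_union_le _ _
    _ ≤ _ := by
        rw [excess_unionFin]
        exact add_le_add_right (Set.encard_iUnion_le_of_fintype _) _

theorem cT_le_of_encard_excess_le {y B : ZFSet} (hB : IsHF B) {k : ℕ}
    (h : (excess y B).encard ≤ k) : IsHF y ∧ cT y ≤ k + cT B := by
  have hle : (TCset y : Set ZFSet).encard ≤ (k + cT B : ℕ) :=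
    calc (TCset y : Set ZFSet).encard
        ≤ (excess y B).encard + (TCset B : Set ZFSet).encard :=
          Set.encard_le_encard_sdiff_add_encard _ _
      _ ≤ (k + cT B : ℕ) := by
          rw [hB.encard_TCset]
          push_cast
          exact add_le_add_left h _
  have hy : IsHF y := Set.finite_of_encard_le_coe hle
  exact ⟨hy, by exact_mod_cast hy.encard_TCset ▸ hle⟩

theorem _root_.MvPolynomial.eval_le_eval_of_le {σ : Type*} (p : MvPolynomial σ ℕ) {v w : σ → ℕ}
    (h : v ≤ w) : MvPolynomial.eval v p ≤ MvPolynomial.eval w p := by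
  induction p using MvPolynomial.induction_on with
  | C a => simp
  | add p q hp hq => simpa using add_le_add hp hq
  | mul_X p i hp => simpa using Nat.mul_le_mul hp (h i)

theorem encard_biUnion_le_mul {ι α : Type*} {W : Set ι} (hW : W.Finite) {E : ι → Set α}
    {K : ℕ∞} (hE : ∀ w ∈ W, (E w).encard ≤ K) : (⋃ w ∈ W, E w).encard ≤ W.encard * K := by
  calc (⋃ w ∈ W, E w).encard
      ≤ ∑ w ∈ hW.toFinset, (E w).encard := by
        simpa using hW.toFinset.set_encard_biUnion_le E
    _ ≤ hW.toFinset.card • K := Finset.sum_le_card_nsmul _ _ _ (by simpa using hE)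
    _ = W.encard * K := by rw [nsmul_eq_mul, ← hW.encard_eq_coe_toFinset_card]

theorem subset_biUnion_TCset_of_subset {α : Type*} {S E : ZFSet → Set α}
    (h : ∀ x, S x ⊆ E x ∪ ⋃ z ∈ x, S z) (x : ZFSet) :
    S x ⊆ ⋃ w ∈ insert x (TCset x : Set ZFSet), E w := by
  induction x using ZFSet.inductionOn with
  | _ x ih =>
    refine (h x).trans (Set.union_subset (Set.subset_biUnion_of_mem (Set.mem_insert x _)) ?_)
    simp only [Set.iUnion_subset_iff]
    intro z hz
    refine (ih z hz).trans (Set.biUnion_subset_biUnion_left ?_)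
    rintro w (rfl | hw)
    · exact Set.mem_insert_of_mem _ (subset_TCset x hz)
    · exact Set.mem_insert_of_mem _ (TCset_subset_of_mem hz hw)

theorem PCSFminus.exists_encard_excess_le {m : ℕ} {h : (Fin m → ZFSet) → ZFSet}
    (hh : PCSFminus m h) : ∃ c : ℕ, ∀ a, (excess (h a) (unionFin a)).encard ≤ c := by
  induction hh with
  | proj j => exact ⟨0, fun a => by simp [excess_unionFin_self]⟩
  | pair =>
    refine ⟨2, fun a => ?_⟩
    have hsub : excess {a 0, a 1} (unionFin a) ⊆ {a 0, a 1} := by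
      refine (excess_subset _ _).trans (Set.union_subset (by simp) ?_)
      simp [excess_unionFin_self]
    calc (excess {a 0, a 1} (unionFin a)).encard
        ≤ ({a 0, a 1} : Set ZFSet).encard := Set.encard_le_encard hsub
      _ ≤ ({a 1} : Set ZFSet).encard + 1 := Set.encard_insert_le _ _
      _ = 2 := by rw [Set.encard_singleton]; rfl
  | null => exact ⟨0, fun a => by simp [excess_eq_empty (ZFSet.empty_subset _)]⟩
  | union =>
    refine ⟨0, fun a => ?_⟩
    have hsub : ZFSet.sUnion (a 0) ⊆ TCset (unionFin a) := by
      intro z hz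
      obtain ⟨w, hw, hzw⟩ := ZFSet.mem_sUnion.1 hz
      exact (isTransitive_TCset _).subset_of_mem
        (subset_TCset _ (mem_unionFin.2 ⟨0, hw⟩)) hzw
    simp [excess_eq_empty hsub]
  | cond => exact ⟨0, fun a => by dsimp only; split_ifs <;> simp [excess_unionFin_self]⟩
  | comp h t _ _ ihh iht =>
    obtain ⟨ch, hch⟩ := ihh
    choose ct hct using iht
    refine ⟨ch + ∑ i, ct i, fun a => ?_⟩
    calc (excess (h fun i => t i a) (unionFin a)).encard
        ≤ (excess (h fun i => t i a) (unionFin fun i => t i a)).encard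
          + ∑ i, (excess (t i a) (unionFin a)).encard := encard_excess_le_add_sum _ _ _
      _ ≤ ch + ∑ i, (ct i : ℕ∞) := add_le_add (hch _) (Finset.sum_le_sum fun i _ => hct i a)
      _ = (ch + ∑ i, ct i : ℕ) := by push_cast; rfl
  | sep h _ _ =>
    refine ⟨0, fun a => ?_⟩
    have hsub : ZFSet.sep (fun b => h (Fin.snoc (Fin.init a) b) ≠ ∅) (a (Fin.last _)) ⊆
        TCset (unionFin a) :=
      fun z hz => subset_TCset _ (mem_unionFin.2 ⟨_, (ZFSet.mem_sep.1 hz).1⟩)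
    simp [excess_eq_empty hsub]

def ExcessBoundedBy {n m : ℕ} (f : (Fin n → ZFSet) → (Fin m → ZFSet) → ZFSet)
    (p : MvPolynomial (Fin n) ℕ) : Prop :=
  ∀ X : Fin n → ZFSet, (∀ i, IsHF (X i)) → ∀ A : Fin m → ZFSet,
    (excess (f X A) (unionFin A)).encard ≤ MvPolynomial.eval (fun i => cT (X i)) p

open MvPolynomial

namespace ExcessBoundedBy

theorem comp {n m k l : ℕ} {h : (Fin k → ZFSet) → (Fin l → ZFSet) → ZFSet}
    {r : Fin k → (Fin n → ZFSet) → (Fin 0 → ZFSet) → ZFSet}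
    {t : Fin l → (Fin n → ZFSet) → (Fin m → ZFSet) → ZFSet} {ph : MvPolynomial (Fin k) ℕ}
    {pr : Fin k → MvPolynomial (Fin n) ℕ} {pt : Fin l → MvPolynomial (Fin n) ℕ}
    (hh : ExcessBoundedBy h ph) (hr : ∀ i, ExcessBoundedBy (r i) (pr i))
    (ht : ∀ i, ExcessBoundedBy (t i) (pt i)) :
    ExcessBoundedBy (fun x a => h (fun i => r i x Fin.elim0) fun i => t i x a)
      (bind₁ pr ph + ∑ i, pt i) := by
  intro X hX A
  have hR : ∀ i, IsHF (r i X Fin.elim0) ∧ cT (r i X Fin.elim0) ≤ eval (fun i => cT (X i)) (pr i) :=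
    fun i => by
      have hB : IsHF (unionFin (Fin.elim0 : Fin 0 → ZFSet)) := isHF_unionFin fun j => j.elim0
      simpa [unionFin, cT_empty] using cT_le_of_encard_excess_le hB (hr i X hX Fin.elim0)
  calc (excess (h (fun i => r i X Fin.elim0) fun i => t i X A) (unionFin A)).encard
      ≤ (excess (h (fun i => r i X Fin.elim0) fun i => t i X A) (unionFin fun i => t i X A)).encard
        + ∑ i, (excess (t i X A) (unionFin A)).encard := encard_excess_le_add_sum _ _ _
    _ ≤ eval (fun i => cT (r i X Fin.elim0)) ph + ∑ i, (eval (fun j => cT (X j)) (pt i) : ℕ∞) :=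
        add_le_add (hh _ (fun i => (hR i).1) _) (Finset.sum_le_sum fun i _ => ht i X hX A)
    _ ≤ eval (fun i => eval (fun j => cT (X j)) (pr i)) ph
        + ∑ i, (eval (fun j => cT (X j)) (pt i) : ℕ∞) := by
        gcongr
        exact eval_le_eval_of_le ph fun i => (hR i).2
    _ = eval (fun i => cT (X i)) (bind₁ pr ph + ∑ i, pt i) := by
        have hbind : eval (fun i => cT (X i)) (bind₁ pr ph) =
            eval (fun i => eval (fun j => cT (X j)) (pr i)) ph :=
          aeval_bind₁ (fun i => cT (X i)) pr ph
        simp [hbind]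

theorem recur {n m : ℕ} {h : (Fin (n + 1) → ZFSet) → (Fin (m + 1) → ZFSet) → ZFSet}
    {f : (Fin (n + 1) → ZFSet) → (Fin m → ZFSet) → ZFSet} {ph : MvPolynomial (Fin (n + 1)) ℕ}
    (hh : ExcessBoundedBy h ph)
    (hf : ∀ (x : ZFSet) (y : Fin n → ZFSet) (a : Fin m → ZFSet),
      f (Fin.cons x y) a = h (Fin.cons x y) (Fin.snoc a (zImage (fun z => f (Fin.cons z y) a) x))) :
    ExcessBoundedBy f ((X 0 + 1) * (ph + X 0)) := by
  intro X' hX A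
  obtain ⟨x, y, rfl⟩ : ∃ x y, X' = Fin.cons x y := ⟨X' 0, Fin.tail X', (Fin.cons_self_tail X').symm⟩
  have hx : IsHF x := by simpa using hX 0
  have hy (i : Fin n) : IsHF (y i) := by simpa using hX i.succ
  set J : ZFSet → ZFSet := zImage fun z => f (Fin.cons z y) A
  set E : ZFSet → Set ZFSet := fun w =>
    excess (h (Fin.cons w y) (Fin.snoc A (J w))) (unionFin (Fin.snoc A (J w))) ∪ J w
  set K : ℕ := eval (fun i => cT ((Fin.cons x y : Fin (n + 1) → ZFSet) i)) ph + cT x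
  have step (w : ZFSet) : excess (f (Fin.cons w y) A) (unionFin A) ⊆
      E w ∪ ⋃ z ∈ w, excess (f (Fin.cons z y) A) (unionFin A) := by
    rw [hf]
    exact excess_subset_union_excess_snoc_zImage _ _ _ _
  have bound (w : ZFSet) (hw : w ∈ insert x (TCset x : Set ZFSet)) : (E w).encard ≤ K := by
    have hwx : TCset w ⊆ TCset x := by
      rcases hw with rfl | hw
      exacts [subset_rfl, TCset_subset_of_mem_TCset hw]
    have hwHF : IsHF w := hx.of_TCset_subset hwx
    calc (E w).encard
        ≤ (excess (h (Fin.cons w y) (Fin.snoc A (J w))) (unionFin (Fin.snoc A (J w)))).encard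
          + (J w : Set ZFSet).encard := Set.encard_union_le _ _
      _ ≤ (eval (fun i => cT ((Fin.cons w y : Fin (n + 1) → ZFSet) i)) ph + cT w : ℕ) := by
          push_cast
          have hargs (i : Fin (n + 1)) : IsHF ((Fin.cons w y : Fin (n + 1) → ZFSet) i) := by
            cases i using Fin.cases <;> simp [hwHF, hy]
          exact add_le_add (hh _ hargs _) (encard_zImage_le_cT _ hwHF)
      _ ≤ K := by
          have hph : eval (fun i => cT ((Fin.cons w y : Fin (n + 1) → ZFSet) i)) ph ≤
              eval (fun i => cT ((Fin.cons x y : Fin (n + 1) → ZFSet) i)) ph := by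
            refine eval_le_eval_of_le ph fun i => ?_
            cases i using Fin.cases <;> simp [cT_mono hx hwx]
          exact_mod_cast add_le_add hph (cT_mono hx hwx)
  calc (excess (f (Fin.cons x y) A) (unionFin A)).encard
      ≤ (⋃ w ∈ insert x (TCset x : Set ZFSet), E w).encard :=
        Set.encard_le_encard (subset_biUnion_TCset_of_subset step x)
    _ ≤ (insert x (TCset x : Set ZFSet)).encard * K := encard_biUnion_le_mul (hx.insert x) bound
    _ ≤ (cT x + 1) * K := by
        gcongr
        exact (Set.encard_insert_le _ _).trans_eq (by rw [hx.encard_TCset])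
    _ = eval (fun i => cT ((Fin.cons x y : Fin (n + 1) → ZFSet) i)) ((X 0 + 1) * (ph + X 0)) := by
        simp [K]

end ExcessBoundedBy

theorem PCSF.exists_excessBoundedBy {n m : ℕ} {f : (Fin n → ZFSet) → (Fin m → ZFSet) → ZFSet}
    (hf : PCSF n m f) : ∃ p, ExcessBoundedBy f p := by
  induction hf with
  | ofMinus h hh =>
    obtain ⟨c, hc⟩ := hh.exists_encard_excess_le
    exact ⟨MvPolynomial.C c, fun _ _ A => by simpa using hc A⟩
  | proj j =>
    refine Fin.addCases (fun i => ⟨MvPolynomial.X i, fun X hX A => ?_⟩)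
      (fun i => ⟨0, fun X _ A => ?_⟩) j
    · simpa [excess, ← (hX i).encard_TCset] using Set.encard_le_encard Set.sdiff_subset
    · simp [excess_unionFin_self]
  | comp _ _ _ _ _ _ ihh ihr iht =>
    obtain ⟨ph, hph⟩ := ihh
    choose pr hpr using ihr
    choose pt hpt using iht
    exact ⟨_, hph.comp hpr hpt⟩
  | recur _ _ _ hf ih =>
    obtain ⟨ph, hph⟩ := ih
    exact ⟨_, hph.recur hf⟩

/-- For every `f ∈ PCSF` there is a polynomial `p_f` such
that for all hereditarily finite sets `X̄, Ā`:
`cT(f(X̄/Ā)) ≤ p_f(cT(X₁),…,cT(Xₙ)) + cT(A₁ ∪ ⋯ ∪ Aₘ)`. -/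
theorem pcsf_size_bound {n m : ℕ}
    (f : (Fin n → ZFSet) → (Fin m → ZFSet) → ZFSet) (hf : PCSF n m f) :
    ∃ p : MvPolynomial (Fin n) ℕ, ∀ (X : Fin n → ZFSet) (A : Fin m → ZFSet),
      (∀ i, IsHF (X i)) → (∀ j, IsHF (A j)) →
      cT (f X A) ≤ MvPolynomial.eval (fun i => cT (X i)) p + cT (unionFin A) := by
  obtain ⟨p, hp⟩ := hf.exists_excessBoundedBy
  exact ⟨p, fun X A hX hA => (cT_le_of_encard_excess_le (isHF_unionFin hA) (hp X hX A)).2⟩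

end PCSFPaper
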